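/- arXiv:1805.11019 — 10 statements merged into one kernel-verified Lean document; each statement's English description precedes it below -/
import Mathlib

section
/- Let 𝒰 = {Uₙ : n ∈ ℕ} be a γ-cover of X by cozero sets that is γ_F-shrinkable, i.e. there is a γ-cover {Fₙ : n ∈ ℕ} of X by zero-sets with Fₙ ⊆ Uₙ for all n. Then the set S = {f ∈ C(X) : f ≡ 1 on X \ Uₙ for some n ∈ ℕ} is sequentially dense in C_p(X), i.e. every g ∈ C(X) is the limit in the topology of pointwise convergence of a sequence of elements of S. -/
open Set Filter Topology

/-- `C_p(X)`: continuous real functions with the topology of pointwise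
convergence (subspace of the product topology on `X → ℝ`). -/
abbrev Cp (X : Type*) [TopologicalSpace X] : Type _ := {f : X → ℝ // Continuous f}

variable {X : Type*} [TopologicalSpace X]

/-- The constant zero function, as an element of `C_p(X)`. -/
def zeroF (X : Type*) [TopologicalSpace X] : Cp X := ⟨fun _ => 0, continuous_const⟩

/-- A family of sets is an open cover. -/
def IsOpenCover (𝒰 : Set (Set X)) : Prop :=
  (∀ U ∈ 𝒰, IsOpen U) ∧ ⋃₀ 𝒰 = Set.univ

/-- `X` is Rothberger: `S₁(𝒪,𝒪)`. -/
def Rothberger (X : Type*) [TopologicalSpace X] : Prop :=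
  ∀ 𝒰 : ℕ → Set (Set X), (∀ n, IsOpenCover (𝒰 n)) →
    ∃ V : ℕ → Set X, (∀ n, V n ∈ 𝒰 n) ∧ (⋃ n, V n) = Set.univ

/-- `X` is Menger: `S_fin(𝒪,𝒪)`. -/
def Menger (X : Type*) [TopologicalSpace X] : Prop :=
  ∀ 𝒰 : ℕ → Set (Set X), (∀ n, IsOpenCover (𝒰 n)) →
    ∃ 𝒱 : ℕ → Set (Set X), (∀ n, 𝒱 n ⊆ 𝒰 n ∧ (𝒱 n).Finite) ∧
      ⋃₀ (⋃ n, 𝒱 n) = Set.univ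

/-- `A ⊆ C_p(X)` is 1-dense. -/
def OneDense (A : Set (Cp X)) : Prop :=
  ∀ (x : X) (W : Set ℝ), IsOpen W → W.Nonempty → ∃ f ∈ A, f.1 x ∈ W

/-- `A ⊆ C_p(X)` is 1-dense at the function `g`. -/
def OneDenseAt (g : Cp X) (A : Set (Cp X)) : Prop :=
  ∀ (x : X) (ε : ℝ), 0 < ε → ∃ h ∈ A, |h.1 x - g.1 x| < ε

/-- `A ⊆ C_p(X)` is `n`-dense. -/
def NDense (n : ℕ) (A : Set (Cp X)) : Prop :=
  ∀ (x : Fin n → X), Function.Injective x →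
    ∀ (W : Fin n → Set ℝ), (∀ i, IsOpen (W i)) → (∀ i, (W i).Nonempty) →
      ∃ f ∈ A, ∀ i, f.1 (x i) ∈ W i

/-- `A ⊆ C_p(X)` is `n`-dense at the function `g`. -/
def NDenseAt (n : ℕ) (g : Cp X) (A : Set (Cp X)) : Prop :=
  ∀ (x : Fin n → X) (ε : ℝ), 0 < ε →
    ∃ h ∈ A, ∀ i, |h.1 (x i) - g.1 (x i)| < ε

/-- `S ⊆ C_p(X)` is sequentially dense. -/
def SeqDense (S : Set (Cp X)) : Prop :=
  ∀ g : Cp X, ∃ u : ℕ → Cp X, (∀ k, u k ∈ S) ∧ Tendsto u atTop (nhds g)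

/-- `S` converges to the zero function: `S ∈ Γ_𝟎`. -/
def GammaZero (S : Set (Cp X)) : Prop :=
  S.Infinite ∧ zeroF X ∉ S ∧ ∀ U ∈ nhds (zeroF X), (S \ U).Finite

/-- A zero-set of `X`. -/
def IsZeroSet (F : Set X) : Prop := ∃ h : X → ℝ, Continuous h ∧ F = h ⁻¹' {0}

/-- A cozero set of `X`. -/
def IsCozero (U : Set X) : Prop := ∃ h : X → ℝ, Continuous h ∧ U = {x | h x ≠ 0}

/-- A sequence of sets forms a (countable) γ-cover: the family is infinite,
no member is all of `X`, and each point lies in all but finitely many members. -/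
def IsGammaSeq (U : ℕ → Set X) : Prop :=
  (Set.range U).Infinite ∧ (∀ n, U n ≠ Set.univ) ∧
    ∀ x : X, ∀ᶠ n in atTop, x ∈ U n

/-- A countable γ-cover of cozero sets which is γ_F-shrinkable: there are
zero-sets `F n ⊆ U n` forming a γ-cover of `X`. -/
def GammaFShrinkable (U : ℕ → Set X) : Prop :=
  (∀ n, IsCozero (U n)) ∧ IsGammaSeq U ∧
    ∃ F : ℕ → Set X, (∀ n, IsZeroSet (F n)) ∧ (∀ n, F n ⊆ U n) ∧ IsGammaSeq F

/-- `X` satisfies `S₁(Γ_F, 𝒪)`. -/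
def S1GammaFO (X : Type*) [TopologicalSpace X] : Prop :=
  ∀ U : ℕ → ℕ → Set X, (∀ i, GammaFShrinkable (U i)) →
    ∃ m : ℕ → ℕ, (⋃ i, U i (m i)) = Set.univ

/-- For a γ_F-shrinkable γ-cover `{Uₙ}` of cozero sets, the set of continuous
functions equal to `1` off some `Uₙ` is sequentially dense in `C_p(X)`. -/
theorem stmt6 (X : Type*) [TopologicalSpace X] [T35Space X] (U : ℕ → Set X)
    (hU : GammaFShrinkable U) :
    SeqDense {f : Cp X | ∃ n : ℕ, ∀ x ∈ (U n)ᶜ, f.1 x = 1} := by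
  obtain ⟨hcoz, hγU, F, hzero, hsub, hγF⟩ := hU
  intro g
  have key : ∀ n, ∃ u : Cp X, (∀ x ∈ (U n)ᶜ, u.1 x = 1) ∧ (∀ x ∈ F n, u.1 x = g.1 x) := by
    intro n
    obtain ⟨h, hh, hFeq⟩ := hzero n
    obtain ⟨k, hk, hUeq⟩ := hcoz n
    have hden : ∀ x, |h x| + |k x| ≠ 0 := by
      intro x hx
      have h1 : |h x| = 0 := le_antisymm (by nlinarith [abs_nonneg (h x), abs_nonneg (k x)]) (abs_nonneg _)
      have h2 : |k x| = 0 := by nlinarith [abs_nonneg (k x)]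
      have hxF : x ∈ F n := by rw [hFeq]; simpa using abs_eq_zero.mp h1
      have hxU : x ∈ U n := hsub n hxF
      rw [hUeq] at hxU
      exact hxU (abs_eq_zero.mp h2)
    set φ : X → ℝ := fun x => |k x| / (|h x| + |k x|) with hφ
    have hφc : Continuous φ := (hk.abs).div ((hh.abs).add hk.abs) hden
    refine ⟨⟨fun x => φ x * g.1 x + (1 - φ x),
      ((hφc.mul g.2).add (continuous_const.sub hφc))⟩, ?_, ?_⟩
    · intro x hx
      have hk0 : k x = 0 := by
        by_contra hc
        exact hx (by rw [hUeq]; exact hc)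
      simp [hφ, hk0]
    · intro x hx
      have hh0 : h x = 0 := by rw [hFeq] at hx; simpa using hx
      have hk0 : k x ≠ 0 := by
        have := hsub n hx; rw [hUeq] at this; exact this
      have : φ x = 1 := by
        simp only [hφ, hh0, abs_zero, zero_add]
        exact div_self (abs_ne_zero.mpr hk0)
      simp [this]
  choose u hu1 hu2 using key
  refine ⟨u, fun k => ⟨k, hu1 k⟩, ?_⟩
  rw [tendsto_subtype_rng, tendsto_pi_nhds]
  intro x
  have hev : ∀ᶠ n in atTop, (u n).1 x = g.1 x := by
    filter_upwards [hγF.2.2 x] with n hn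
    exact hu2 n x hn
  exact Tendsto.congr' (hev.mono fun n hn => hn.symm) tendsto_const_nhds
end

section
/- If C_p(X) satisfies S₁(𝒜,𝒜) for the family 𝒜 of 1-dense subsets, then X is Rothberger: for each sequence of open covers (𝒪ₙ) of X one can pick Uₙ ∈ 𝒪ₙ with {Uₙ : n ∈ ℕ} a cover of X. -/
open Set Filter Topology

variable {X : Type*} [TopologicalSpace X]

/-- If `C_p(X)` satisfies `S₁(𝒜,𝒜)` then `X` is Rothberger. -/
theorem stmt7 (X : Type*) [TopologicalSpace X] [T35Space X]
    (h : ∀ A : ℕ → Set (Cp X), (∀ n, OneDense (A n)) →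
      ∃ f : ℕ → Cp X, (∀ n, f n ∈ A n) ∧ OneDense (Set.range f)) :
    Rothberger X := by
  intro 𝒰 hcov
  -- A n : functions equal to n outside some U ∈ 𝒰 n
  set A : ℕ → Set (Cp X) := fun n =>
    {f : Cp X | ∃ U ∈ 𝒰 n, ∀ x ∉ U, f.1 x = (n : ℝ)} with hA
  have hAdense : ∀ n, OneDense (A n) := by
    intro n x W hW ⟨r, hr⟩
    -- find U in the cover containing x
    obtain ⟨U, hU, hxU⟩ : ∃ U ∈ 𝒰 n, x ∈ U := by
      have := (hcov n).2
      have hx : x ∈ ⋃₀ 𝒰 n := this ▸ Set.mem_univ x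
      exact hx
    have hUopen : IsOpen U := (hcov n).1 U hU
    obtain ⟨g, hg, hgx, hgK⟩ := CompletelyRegularSpace.completely_regular x Uᶜ
      hUopen.isClosed_compl (by simpa using hxU)
    refine ⟨⟨fun y => r * (1 - (g y : ℝ)) + n * (g y : ℝ), by fun_prop⟩,
      ⟨U, hU, ?_⟩, ?_⟩
    · intro y hy
      have : g y = 1 := hgK hy
      simp [this]
    · have : g x = 0 := hgx
      simpa [this] using hr
  obtain ⟨f, hfA, hfd⟩ := h A hAdense
  choose V hV hVe using hfA
  refine ⟨V, hV, ?_⟩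
  ext x
  simp only [Set.mem_iUnion, Set.mem_univ, iff_true]
  by_contra hx
  push_neg at hx
  obtain ⟨g, hg, hgx⟩ := hfd x (Set.Ioo (-1) 0) isOpen_Ioo ⟨-1/2, by norm_num⟩
  obtain ⟨n, rfl⟩ := hg
  have := hVe n x (hx n)
  rw [this] at hgx
  have : (0:ℝ) ≤ n := Nat.cast_nonneg n
  linarith [hgx.2]
end

section
/- If C_p(X) satisfies S₁(𝒜, 𝒜_f) at every constant rational function, then C_p(X) satisfies S₁(𝒜,𝒜): for every sequence (Aₙ) of 1-dense subsets of C_p(X) there are fₙ ∈ Aₙ such that {fₙ : n ∈ ℕ} is 1-dense. -/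
open Set Filter Topology

variable {X : Type*} [TopologicalSpace X]

/-- If `C_p(X)` satisfies `S₁(𝒜, 𝒜_q)` at every constant rational function `q`,
then `C_p(X)` satisfies `S₁(𝒜,𝒜)`. -/
theorem stmt9 (X : Type*) [TopologicalSpace X] [T35Space X]
    (h : ∀ q : ℚ, ∀ A : ℕ → Set (Cp X), (∀ n, OneDense (A n)) →
      ∃ g : ℕ → Cp X, (∀ n, g n ∈ A n) ∧
        OneDenseAt ⟨fun _ => (q : ℝ), continuous_const⟩ (Set.range g)) :
    ∀ A : ℕ → Set (Cp X), (∀ n, OneDense (A n)) →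
      ∃ g : ℕ → Cp X, (∀ n, g n ∈ A n) ∧ OneDense (Set.range g) := by
  intro A hA
  let e : ℚ × ℕ ≃ ℕ := Denumerable.eqv (ℚ × ℕ)
  -- for each rational q, apply the hypothesis to the subsequence of A indexed by e (q, ·)
  have key : ∀ q : ℚ, ∃ gq : ℕ → Cp X, (∀ n, gq n ∈ A (e (q, n))) ∧
      OneDenseAt ⟨fun _ => (q : ℝ), continuous_const⟩ (Set.range gq) := by
    intro q
    exact h q (fun n => A (e (q, n))) (fun n => hA _)
  choose gq hgq hdense using key
  refine ⟨fun n => gq (e.symm n).1 (e.symm n).2, ?_, ?_⟩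
  · intro n
    have := hgq (e.symm n).1 (e.symm n).2
    simpa using this
  · intro x W hW hWne
    obtain ⟨w, hw⟩ := hWne
    obtain ⟨ε, hε, hball⟩ := Metric.isOpen_iff.mp hW w hw
    obtain ⟨q, hq⟩ := exists_rat_near w (half_pos hε)
    obtain ⟨f, ⟨n, hn⟩, hf⟩ := hdense q x (ε / 2) (half_pos hε)
    refine ⟨f, ⟨e (q, n), ?_⟩, hball ?_⟩
    · simp [← hn]
    · have : |f.1 x - w| < ε := by
        calc |f.1 x - w| ≤ |f.1 x - (q : ℝ)| + |(q : ℝ) - w| := abs_sub_le _ _ _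
          _ < ε / 2 + ε / 2 := by
              have : |(q : ℝ) - w| = |w - (q : ℝ)| := abs_sub_comm _ _
              rw [this]; exact add_lt_add hf hq
          _ = ε := add_halves ε
      simpa [Metric.mem_ball, Real.dist_eq] using this
end

section
/- If X is Rothberger, then C_p(X) satisfies S₁(𝒜_𝟎, 𝒜_𝟎): for every sequence (Bₙ) of subsets of C_p(X) each 1-dense at the zero function 𝟎, there are fₙ ∈ Bₙ such that {fₙ : n ∈ ℕ} is 1-dense at 𝟎. -/
open Set Filter Topology

variable {X : Type*} [TopologicalSpace X]

/-- If `X` is Rothberger then `C_p(X)` satisfies `S₁(𝒜_𝟎, 𝒜_𝟎)`. -/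
theorem stmt10 (X : Type*) [TopologicalSpace X] [T35Space X] (hR : Rothberger X) :
    ∀ B : ℕ → Set (Cp X), (∀ n, OneDenseAt (zeroF X) (B n)) →
      ∃ f : ℕ → Cp X, (∀ n, f n ∈ B n) ∧ OneDenseAt (zeroF X) (Set.range f) := by
  intro B hB
  set e : ℕ × ℕ ≃ ℕ := Nat.pairEquiv
  have key : ∀ k : ℕ, ∃ g : ℕ → Cp X, (∀ n, g n ∈ B (e (k, n))) ∧
      ∀ x : X, ∃ n, |(g n).1 x| < 1 / (k + 1 : ℝ) := by
    intro k
    have hδ : (0:ℝ) < 1 / (k + 1 : ℝ) := by positivity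
    have hoc : ∀ n, IsOpenCover
        ((fun h : Cp X => {x | |h.1 x| < 1 / (k + 1 : ℝ)}) '' (B (e (k, n)))) := by
      intro n
      constructor
      · rintro U ⟨h, -, rfl⟩
        exact isOpen_lt (h.2.abs) continuous_const
      · ext x
        simp only [mem_sUnion, mem_univ, iff_true]
        obtain ⟨h, hhB, hhx⟩ := hB (e (k, n)) x (1 / (k + 1 : ℝ)) hδ
        refine ⟨_, ⟨h, hhB, rfl⟩, ?_⟩
        simpa [zeroF] using hhx
    obtain ⟨V, hV, hVcov⟩ := hR
      (fun n => (fun h : Cp X => {x | |h.1 x| < 1 / (k + 1 : ℝ)}) '' (B (e (k, n)))) hoc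
    choose g hg hgV using hV
    refine ⟨g, hg, fun x => ?_⟩
    have hx : x ∈ ⋃ n, V n := hVcov ▸ mem_univ x
    obtain ⟨n, hn⟩ := mem_iUnion.1 hx
    exact ⟨n, by rw [← hgV n] at hn; exact hn⟩
  choose g hg1 hg2 using key
  refine ⟨fun m => g (e.symm m).1 (e.symm m).2, fun m => ?_, ?_⟩
  · have := hg1 (e.symm m).1 (e.symm m).2
    simpa using this
  · intro x ε hε
    obtain ⟨k, hk⟩ := exists_nat_gt (1 / ε)
    have hkε : 1 / (k + 1 : ℝ) < ε := by
      rw [div_lt_iff₀ (by positivity)]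
      have h1 : 1 < ε * k := by
        have := (div_lt_iff₀ hε).1 hk
        linarith
      nlinarith
    obtain ⟨n, hn⟩ := hg2 k x
    refine ⟨g (e.symm (e (k, n))).1 (e.symm (e (k, n))).2, mem_range_self (e (k, n)), ?_⟩
    simp only [Equiv.symm_apply_apply, zeroF, sub_zero]
    exact lt_trans hn hkε
end

section
/- If C_p(X) satisfies S₁(𝒮, 𝒜_q) at every constant rational function q (where 𝒮 is the family of sequentially dense subsets of C_p(X)), then C_p(X) satisfies S₁(𝒮,𝒜): for every sequence (Sₙ) of sequentially dense subsets there are fₙ ∈ Sₙ with {fₙ : n ∈ ℕ} 1-dense. -/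
open Set Filter Topology

variable {X : Type*} [TopologicalSpace X]

/-- If `C_p(X)` satisfies `S₁(𝒮, 𝒜_q)` at every constant rational function,
then `C_p(X)` satisfies `S₁(𝒮,𝒜)`. -/
theorem stmt12 (X : Type*) [TopologicalSpace X] [T35Space X]
    (h : ∀ q : ℚ, ∀ S : ℕ → Set (Cp X), (∀ n, SeqDense (S n)) →
      ∃ f : ℕ → Cp X, (∀ n, f n ∈ S n) ∧
        OneDenseAt ⟨fun _ => (q : ℝ), continuous_const⟩ (Set.range f)) :
    ∀ S : ℕ → Set (Cp X), (∀ n, SeqDense (S n)) →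
      ∃ f : ℕ → Cp X, (∀ n, f n ∈ S n) ∧ OneDense (Set.range f) := by
  intro S hS
  let e : ℕ ≃ ℚ × ℕ := (Denumerable.eqv (ℚ × ℕ)).symm
  -- for each rational q, select from the q-th subsequence
  have key : ∀ q : ℚ, ∃ g : ℕ → Cp X, (∀ n, g n ∈ S (e.symm (q, n))) ∧
      OneDenseAt ⟨fun _ => (q : ℝ), continuous_const⟩ (Set.range g) := by
    intro q
    exact h q (fun n => S (e.symm (q, n))) (fun n => hS _)
  choose g hg hdense using key
  refine ⟨fun n => g (e n).1 (e n).2, fun n => ?_, ?_⟩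
  · have := hg (e n).1 (e n).2
    simpa using this
  · intro x W hW hWne
    obtain ⟨w, hw⟩ := hWne
    obtain ⟨ε, hε, hball⟩ := Metric.isOpen_iff.mp hW w hw
    obtain ⟨q, hq⟩ := exists_rat_near w (by linarith : (0:ℝ) < ε/2)
    obtain ⟨hfun, ⟨n, hn⟩, hclose⟩ := hdense q x (ε/2) (by linarith)
    refine ⟨hfun, ⟨e.symm (q, n), ?_⟩, hball ?_⟩
    · simp [hn]
    · have : |hfun.1 x - w| < ε := by
        have h1 : |hfun.1 x - (q:ℝ)| < ε/2 := hclose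
        have h2 : |w - (q:ℝ)| < ε/2 := hq
        calc |hfun.1 x - w| ≤ |hfun.1 x - q| + |(q:ℝ) - w| := abs_sub_le _ _ _
        _ < ε/2 + ε/2 := by
          have h2' : |(q:ℝ) - w| < ε/2 := by rw [abs_sub_comm]; exact h2
          linarith
        _ = ε := by ring
      simpa [Metric.mem_ball, Real.dist_eq] using this
end

section
/- If C_p(X) satisfies S₁(𝒮,𝒜), then X satisfies S₁(Γ_F, 𝒪): for every sequence (𝒰ᵢ) of γ_F-shrinkable countable γ-covers of X by cozero sets, one can pick Uᵢ ∈ 𝒰ᵢ such that {Uᵢ : i ∈ ℕ} covers X. -/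
open Set Filter Topology

variable {X : Type*} [TopologicalSpace X]

/-- If `C_p(X)` satisfies `S₁(𝒮,𝒜)` then `X` satisfies `S₁(Γ_F,𝒪)`. -/
theorem stmt13 (X : Type*) [TopologicalSpace X] [T35Space X]
    (h : ∀ S : ℕ → Set (Cp X), (∀ n, SeqDense (S n)) →
      ∃ f : ℕ → Cp X, (∀ n, f n ∈ S n) ∧ OneDense (Set.range f)) :
    S1GammaFO X := by
  intro U hU
  set S : ℕ → Set (Cp X) := fun i => {f | ∃ n, ∀ x, x ∉ U i n → f.1 x = 1} with hSdef
  have hseq : ∀ i, SeqDense (S i) := by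
    intro i g
    obtain ⟨hcoz, hgam, F, hFzero, hFsub, hFgam⟩ := hU i
    choose k hkc hkU using hcoz
    choose p hpc hpF using hFzero
    have hden : ∀ n x, 0 < (k n x)^2 + (p n x)^2 := by
      intro n x
      rcases eq_or_ne (p n x) 0 with h0 | h0
      · have hx : x ∈ F n := by rw [hpF n]; simpa using h0
        have hxU : x ∈ U i n := hFsub n hx
        rw [hkU n] at hxU
        have hk : k n x ≠ 0 := hxU
        have : 0 < (k n x)^2 := by positivity
        nlinarith [sq_nonneg (p n x)]
      · have : 0 < (p n x)^2 := by positivity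
        nlinarith [sq_nonneg (k n x)]
    set φ : ℕ → X → ℝ := fun n x => (k n x)^2 / ((k n x)^2 + (p n x)^2) with hφ
    have hφc : ∀ n, Continuous (φ n) := by
      intro n
      exact (((hkc n).pow 2)).div (((hkc n).pow 2).add ((hpc n).pow 2))
        (fun x => (hden n x).ne')
    have hu : ∀ n, Continuous (fun x => 1 + φ n x * (g.1 x - 1)) := by
      intro n
      exact continuous_const.add ((hφc n).mul (g.2.sub continuous_const))
    refine ⟨fun n => ⟨fun x => 1 + φ n x * (g.1 x - 1), hu n⟩, ?_, ?_⟩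
    · intro n
      refine ⟨n, fun x hx => ?_⟩
      have hk0 : k n x = 0 := by
        by_contra hk0
        exact hx ((hkU n).symm ▸ hk0)
      simp [hφ, hk0]
    · rw [tendsto_subtype_rng]
      rw [tendsto_pi_nhds]
      intro x
      have hev : ∀ᶠ n in atTop, x ∈ F n := hFgam.2.2 x
      have hev2 : ∀ᶠ n in atTop, (1 : ℝ) + φ n x * (g.1 x - 1) = g.1 x := by
        filter_upwards [hev] with n hx
        have hp0 : p n x = 0 := by
          have := hx
          rw [hpF n] at this
          simpa using this
        have hxU : x ∈ U i n := hFsub n hx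
        rw [hkU n] at hxU
        have hφ1 : φ n x = 1 := by
          have hk : k n x ≠ 0 := hxU
          simp only [hφ, hp0]
          norm_num [div_self (pow_ne_zero 2 hk)]
        rw [hφ1]; ring
      exact Tendsto.congr' (hev2.mono fun _ e => e.symm) tendsto_const_nhds
  obtain ⟨f, hfS, hfD⟩ := h S hseq
  choose m hm using hfS
  refine ⟨m, ?_⟩
  ext x
  simp only [Set.mem_iUnion, Set.mem_univ, iff_true]
  by_contra hx
  push_neg at hx
  obtain ⟨g, hgmem, hgx⟩ := hfD x {1}ᶜ (isOpen_compl_singleton) ⟨0, by norm_num⟩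
  obtain ⟨i, rfl⟩ := hgmem
  exact hgx (hm i x (hx i))
end

section
/- If X satisfies S₁(Γ_F, 𝒪), then C_p(X) satisfies S₁(Γ_𝟎, 𝒜_𝟎): for every sequence (Sₙ) of subsets of C_p(X), each converging pointwise to the zero function 𝟎 (i.e. Sₙ ∈ Γ_𝟎), one can choose fₙ ∈ Sₙ such that {fₙ : n ∈ ℕ} is 1-dense at 𝟎. -/
open Set Filter Topology

variable {X : Type*} [TopologicalSpace X]

/-!
Fix `ε = 1/(k+1)`. If some `Sₙ` contains a function with `|f| < ε` everywhere, choose it.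
Otherwise every `f ∈ Sₙ` has `|f(x)| ≥ ε` somewhere, so enumerating `Sₙ` injectively, the sets
`{|f| < ε}` are cozero sets different from `X`, and since `Sₙ → 𝟎` pointwise they form a γ-cover,
shrinkable to the γ-cover by the zero-sets `{|f| ≤ ε/2}`. `S₁(Γ_F,𝒪)` then picks one `fₙ ∈ Sₙ` per
`n` with `X = ⋃ {|fₙ| < ε}`. Running this for every `k` on the disjoint blocks `n = ⟨k, i⟩` of
indices gives 1-density at `𝟎`.
-/

lemma isCozero_setOf_lt {f : X → ℝ} (hf : Continuous f) (c : ℝ) : IsCozero {x | f x < c} := by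
  refine ⟨fun x => max (c - f x) 0, (continuous_const.sub hf).max continuous_const, ?_⟩
  ext x
  simp

lemma isZeroSet_setOf_le {f : X → ℝ} (hf : Continuous f) (c : ℝ) : IsZeroSet {x | f x ≤ c} := by
  refine ⟨fun x => max (f x - c) 0, (hf.sub continuous_const).max continuous_const, ?_⟩
  ext x
  simp

/-- Pick a point outside each of the finitely many members; eventually `U j` contains all of them,
including the one chosen outside `U j`. -/
lemma infinite_range_of_eventually_mem {α : Type*} {U : ℕ → Set α} (hne : ∀ j, U j ≠ univ)
    (hev : ∀ x, ∀ᶠ j in atTop, x ∈ U j) : (range U).Infinite := by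
  intro hfin
  have : Finite (range U) := hfin
  have hout : ∀ V : range U, ∃ x, x ∉ V.1 := by
    rintro ⟨_, j, rfl⟩
    exact (ne_univ_iff_exists_notMem _).1 (hne j)
  choose p hp using hout
  obtain ⟨j, hj⟩ := (eventually_all.2 fun V => hev (p V)).exists
  exact hp ⟨U j, j, rfl⟩ (hj _)

lemma isGammaSeq_of_eventually_mem {α : Type*} {U : ℕ → Set α} (hne : ∀ j, U j ≠ univ)
    (hev : ∀ x, ∀ᶠ j in atTop, x ∈ U j) : IsGammaSeq U :=
  ⟨infinite_range_of_eventually_mem hne hev, hne, hev⟩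

lemma GammaZero.tendsto_of_injective {S : Set (Cp X)} (hS : GammaZero S) {g : ℕ → Cp X}
    (hinj : Function.Injective g) (hgS : ∀ j, g j ∈ S) : Tendsto g atTop (𝓝 (zeroF X)) := by
  intro U hU
  rw [mem_map, ← Nat.cofinite_eq_atTop, mem_cofinite]
  exact ((hS.2.2 U hU).preimage hinj.injOn).subset fun j hj => ⟨hgS j, hj⟩

lemma eventually_abs_lt_of_tendsto {g : ℕ → Cp X} (hg : Tendsto g atTop (𝓝 (zeroF X))) (x : X)
    {δ : ℝ} (hδ : 0 < δ) : ∀ᶠ j in atTop, |(g j).1 x| < δ := by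
  have hx : Tendsto (fun j => (g j).1 x) atTop (𝓝 0) :=
    ((continuous_apply x).comp continuous_subtype_val).continuousAt.tendsto.comp hg
  simpa only [Real.dist_0_eq_abs] using Metric.tendsto_nhds.1 hx δ hδ

lemma gammaFShrinkable_of_tendsto {g : ℕ → Cp X} (hg : Tendsto g atTop (𝓝 (zeroF X)))
    {ε : ℝ} (hε : 0 < ε) (hbig : ∀ j, ∃ x, ε ≤ |(g j).1 x|) :
    GammaFShrinkable fun j => {x | |(g j).1 x| < ε} := by
  have hne : ∀ j, {x | |(g j).1 x| < ε} ≠ univ := by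
    intro j huniv
    obtain ⟨x, hx⟩ := hbig j
    have : x ∈ {x | |(g j).1 x| < ε} := huniv ▸ mem_univ x
    exact this.not_ge hx
  have hsub : ∀ j, {x | |(g j).1 x| ≤ ε / 2} ⊆ {x | |(g j).1 x| < ε} :=
    fun j x hx => lt_of_le_of_lt hx (half_lt_self hε)
  refine ⟨fun j => isCozero_setOf_lt (g j).2.abs ε, isGammaSeq_of_eventually_mem hne ?_,
    _, fun j => isZeroSet_setOf_le (g j).2.abs (ε / 2), hsub,
    isGammaSeq_of_eventually_mem ?_ ?_⟩
  · exact fun x => eventually_abs_lt_of_tendsto hg x hε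
  · exact fun j huniv => hne j (eq_univ_of_univ_subset (huniv ▸ hsub j))
  · exact fun x => (eventually_abs_lt_of_tendsto hg x (half_pos hε)).mono fun _ => le_of_lt

lemma S1GammaFO.exists_cover_by_abs_lt (h : S1GammaFO X) {S : ℕ → Set (Cp X)}
    (hS : ∀ n, GammaZero (S n)) {ε : ℝ} (hε : 0 < ε) :
    ∃ f : ℕ → Cp X, (∀ n, f n ∈ S n) ∧ ∀ x, ∃ n, |(f n).1 x| < ε := by
  classical
  by_cases hsmall : ∃ n, ∃ f ∈ S n, ∀ x, |f.1 x| < ε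
  · obtain ⟨n₀, f₀, hf₀S, hf₀⟩ := hsmall
    choose s hs using fun n => (hS n).1.nonempty
    refine ⟨Function.update s n₀ f₀, fun n => ?_, fun x => ⟨n₀, by simpa using hf₀ x⟩⟩
    rcases eq_or_ne n n₀ with rfl | hn
    · simpa using hf₀S
    · simpa [hn] using hs n
  · push Not at hsmall
    let G : ℕ → ℕ → Cp X := fun n j => Set.Infinite.natEmbedding _ (hS n).1 j
    have hGinj : ∀ n, Function.Injective (G n) :=
      fun n => Subtype.val_injective.comp (Set.Infinite.natEmbedding _ (hS n).1).injective
    have hGS : ∀ n j, G n j ∈ S n := fun n j => (Set.Infinite.natEmbedding _ (hS n).1 j).2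
    obtain ⟨m, hm⟩ := h _ fun n => gammaFShrinkable_of_tendsto
      ((hS n).tendsto_of_injective (hGinj n) (hGS n)) hε fun j => hsmall n _ (hGS n j)
    refine ⟨fun n => G n (m n), fun n => hGS n (m n), fun x => ?_⟩
    have hx : x ∈ ⋃ n, {x | |(G n (m n)).1 x| < ε} := hm ▸ mem_univ x
    simpa using hx

theorem stmt14_general (X : Type*) [TopologicalSpace X] (h : S1GammaFO X) :
    ∀ S : ℕ → Set (Cp X), (∀ n, GammaZero (S n)) →
      ∃ f : ℕ → Cp X, (∀ n, f n ∈ S n) ∧ OneDenseAt (zeroF X) (Set.range f) := by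
  intro S hS
  choose g hgS hg using fun k : ℕ =>
    h.exists_cover_by_abs_lt (fun i => hS (Nat.pair k i)) (Nat.one_div_pos_of_nat (n := k))
  refine ⟨fun n => g n.unpair.1 n.unpair.2, fun n => by simpa using hgS n.unpair.1 n.unpair.2,
    fun x ε hε => ?_⟩
  obtain ⟨k, hk⟩ := exists_nat_one_div_lt hε
  obtain ⟨i, hi⟩ := hg k x
  refine ⟨g k i, ⟨Nat.pair k i, by simp⟩, ?_⟩
  simpa [zeroF] using hi.trans hk

/-- If `X` satisfies `S₁(Γ_F,𝒪)` then `C_p(X)` satisfies `S₁(Γ_𝟎, 𝒜_𝟎)`. -/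
theorem stmt14 (X : Type*) [TopologicalSpace X] [T35Space X] (h : S1GammaFO X) :
    ∀ S : ℕ → Set (Cp X), (∀ n, GammaZero (S n)) →
      ∃ f : ℕ → Cp X, (∀ n, f n ∈ S n) ∧ OneDenseAt (zeroF X) (Set.range f) :=
  stmt14_general X h
end

section
/- If X satisfies S₁(Γ,𝒪) (for every sequence of countable open γ-covers one can pick one member from each to obtain an open cover), then C_p(X) satisfies S₁(𝒮,𝒜): for every sequence of sequentially dense subsets of C_p(X) one can pick one function from each so that the chosen set is 1-dense. -/
open Set Filter Topology

variable {X : Type*} [TopologicalSpace X]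

/-- If `X` satisfies `S₁(Γ,𝒪)` (for countable open γ-covers) then `C_p(X)`
satisfies `S₁(𝒮,𝒜)`. -/
theorem stmt16 (X : Type*) [TopologicalSpace X] [T35Space X]
    (h : ∀ U : ℕ → ℕ → Set X,
      (∀ i, (∀ n, IsOpen (U i n)) ∧ IsGammaSeq (U i)) →
      ∃ m : ℕ → ℕ, (⋃ i, U i (m i)) = Set.univ) :
    ∀ S : ℕ → Set (Cp X), (∀ n, SeqDense (S n)) →
      ∃ f : ℕ → Cp X, (∀ n, f n ∈ S n) ∧ OneDense (Set.range f) := by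
  intro S hS
  classical
  obtain ⟨P, hPsurj⟩ := exists_surjective_nat (ℚ × ℚ)
  -- choose, for each n, a sequence in S n converging pointwise to the constant
  -- function with value the first coordinate of the pair coded by the column of n
  have key : ∀ n : ℕ, ∃ u : ℕ → Cp X, (∀ k, u k ∈ S n) ∧
      ∀ x : X, Tendsto (fun k => (u k).1 x) atTop
        (nhds ((P (Nat.unpair n).2).1 : ℝ)) := by
    intro n
    obtain ⟨u, hum, hconv⟩ := hS n ⟨fun _ => ((P (Nat.unpair n).2).1 : ℝ), continuous_const⟩
    refine ⟨u, hum, fun x => ?_⟩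
    have hc : Continuous fun f : Cp X => f.1 x :=
      (continuous_apply x).comp continuous_subtype_val
    exact (hc.tendsto _).comp hconv
  choose u hu hconv using key
  have claim : ∀ t : ℕ, ∃ κ : ℕ → ℕ, (0 : ℝ) < ((P t).2 : ℝ) →
      ∀ x : X, ∃ i : ℕ,
        |(u (Nat.pair i t) (κ i)).1 x - ((P t).1 : ℝ)| < ((P t).2 : ℝ) := by
    intro t
    by_cases hε : (0 : ℝ) < ((P t).2 : ℝ)
    · set q : ℝ := ((P t).1 : ℝ) with hq
      set ε : ℝ := ((P t).2 : ℝ) with hεdef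
      set U : ℕ → ℕ → Set X :=
        fun i k => {x | |(u (Nat.pair i t) k).1 x - q| < ε} with hU
      have hUopen : ∀ i k, IsOpen (U i k) := fun i k =>
        isOpen_lt (Continuous.abs ((u _ k).2.sub continuous_const)) continuous_const
      have hmem : ∀ i (x : X), ∀ᶠ k in atTop, x ∈ U i k := by
        intro i x
        have hcv := hconv (Nat.pair i t) x
        rw [Nat.unpair_pair] at hcv
        obtain ⟨N, hN⟩ := Metric.tendsto_atTop.mp hcv ε hε
        refine eventually_atTop.mpr ⟨N, fun k hk => ?_⟩
        have := hN k hk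
        rw [Real.dist_eq] at this
        exact this
      by_cases hmain : ∃ i k, U i k = Set.univ
      · obtain ⟨i, k, hik⟩ := hmain
        refine ⟨fun _ => k, fun _ x => ⟨i, ?_⟩⟩
        have : x ∈ U i k := hik ▸ Set.mem_univ x
        exact this
      · push_neg at hmain
        have hrows : ∀ i, (∀ k, IsOpen (U i k)) ∧ IsGammaSeq (U i) := by
          intro i
          refine ⟨hUopen i, ?_, hmain i, hmem i⟩
          by_contra hfin
          rw [Set.not_infinite] at hfin
          have hfs : Finite ↥(Set.range (U i)) := hfin.to_subtype
          obtain ⟨V, hV⟩ := Finite.exists_infinite_fiber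
            (fun k => (⟨U i k, Set.mem_range_self k⟩ : ↥(Set.range (U i))))
          have hVuniv : (V : Set X) = Set.univ := by
            ext x
            simp only [Set.mem_univ, iff_true]
            obtain ⟨N, hN⟩ := eventually_atTop.mp (hmem i x)
            obtain ⟨k, hk1, hk2⟩ := (Set.infinite_coe_iff.mp hV).exists_gt N
            have hkV : U i k = (V : Set X) := by
              have := hk1
              simpa using congrArg Subtype.val this
            rw [← hkV]
            exact hN k (le_of_lt hk2)
          obtain ⟨k₀, hk₀⟩ := V.2
          exact hmain i k₀ (hk₀.trans hVuniv)
        obtain ⟨m, hm⟩ := h U hrows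
        refine ⟨m, fun _ x => ?_⟩
        have hx : x ∈ ⋃ i, U i (m i) := hm ▸ Set.mem_univ x
        obtain ⟨i, hxi⟩ := Set.mem_iUnion.mp hx
        exact ⟨i, hxi⟩
    · exact ⟨fun _ => 0, fun h' => absurd h' hε⟩
  choose κ hκ using claim
  refine ⟨fun n => u n (κ (Nat.unpair n).2 (Nat.unpair n).1),
    fun n => hu n _, ?_⟩
  intro x W hW hWne
  obtain ⟨r, hr⟩ := hWne
  obtain ⟨ε, hε, hball⟩ := Metric.isOpen_iff.mp hW r hr
  obtain ⟨q', hq1, hq2⟩ := exists_rat_btwn (show r - ε / 2 < r by linarith)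
  obtain ⟨ε', hε1, hε2⟩ := exists_rat_btwn (show (0 : ℝ) < ε / 2 by linarith)
  obtain ⟨t, hPt⟩ := hPsurj (q', ε')
  have hpos : (0 : ℝ) < ((P t).2 : ℝ) := by rw [hPt]; exact_mod_cast hε1
  obtain ⟨i, hi⟩ := hκ t hpos x
  refine ⟨_, Set.mem_range_self (Nat.pair i t), ?_⟩
  rw [hPt] at hi
  simp only [Nat.unpair_pair]
  apply hball
  rw [Metric.mem_ball, Real.dist_eq]
  have h1 : |(u (Nat.pair i t) (κ t i)).1 x - (q' : ℝ)| < (ε' : ℝ) := hi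
  have h2 : |(q' : ℝ) - r| < ε / 2 := by rw [abs_lt]; constructor <;> linarith
  calc |(u (Nat.pair i t) (κ t i)).1 x - r|
      ≤ |(u (Nat.pair i t) (κ t i)).1 x - (q' : ℝ)| + |(q' : ℝ) - r| := abs_sub_le _ _ _
    _ < ε' + ε / 2 := by linarith
    _ < ε := by linarith
end

section
/- If C_p(X) satisfies S_fin(𝒜,𝒜), then X is Menger. -/
open Set Filter Topology

variable {X : Type*} [TopologicalSpace X]

/-- If `C_p(X)` satisfies `S_fin(𝒜,𝒜)` then `X` is Menger. -/
theorem stmt17 (X : Type*) [TopologicalSpace X] [T35Space X]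
    (h : ∀ A : ℕ → Set (Cp X), (∀ n, OneDense (A n)) →
      ∃ B : ℕ → Set (Cp X), (∀ n, B n ⊆ A n ∧ (B n).Finite) ∧
        OneDense (⋃ n, B n)) :
    Menger X := by
  intro 𝒰 h𝒰
  classical
  -- the 1-dense sets associated to the covers
  set A : ℕ → Set (Cp X) := fun n =>
    {f : Cp X | ∃ U ∈ 𝒰 n, ∀ x ∉ U, f.1 x = 1} with hA
  have hAdense : ∀ n, OneDense (A n) := by
    intro n x W hW hWne
    obtain ⟨r, hr⟩ := hWne
    -- x lies in some U ∈ 𝒰 n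
    have hx : x ∈ ⋃₀ 𝒰 n := by rw [(h𝒰 n).2]; trivial
    obtain ⟨U, hU, hxU⟩ := hx
    have hUopen := (h𝒰 n).1 U hU
    obtain ⟨g, hg, hgx, hgK⟩ := CompletelyRegularSpace.completely_regular x Uᶜ
      hUopen.isClosed_compl (by simpa using hxU)
    refine ⟨⟨fun y => r + (1 - r) * (g y : ℝ), by fun_prop⟩, ⟨U, hU, ?_⟩, ?_⟩
    · intro y hy
      have : g y = 1 := hgK hy
      simp [this]
    · have : (g x : ℝ) = 0 := by
        have := hgx; simp only [this]; rfl
      simpa [this] using hr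
  obtain ⟨B, hBsub, hBdense⟩ := h A hAdense
  -- witness function: for f ∈ B n pick a witness U ∈ 𝒰 n
  set w : ℕ → Cp X → Set X := fun n f =>
    if hf : ∃ U ∈ 𝒰 n, ∀ x ∉ U, f.1 x = 1 then hf.choose else ∅ with hw
  refine ⟨fun n => w n '' B n, fun n => ⟨?_, ((hBsub n).2.image _)⟩, ?_⟩
  · rintro _ ⟨f, hf, rfl⟩
    have hfA : f ∈ A n := (hBsub n).1 hf
    obtain ⟨U, hU, hU1⟩ := hfA
    have hex : ∃ U ∈ 𝒰 n, ∀ x ∉ U, f.1 x = 1 := ⟨U, hU, hU1⟩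
    simp only [hw, dif_pos hex]
    exact hex.choose_spec.1
  · ext x
    simp only [mem_univ, iff_true]
    obtain ⟨f, hf, hfx⟩ := hBdense x (Set.Iio 1) isOpen_Iio ⟨0, by norm_num⟩
    obtain ⟨n, hfn⟩ := Set.mem_iUnion.mp hf
    have hfA : f ∈ A n := (hBsub n).1 hfn
    have hex : ∃ U ∈ 𝒰 n, ∀ x ∉ U, f.1 x = 1 := hfA
    refine ⟨w n f, Set.mem_iUnion.mpr ⟨n, ⟨f, hfn, rfl⟩⟩, ?_⟩
    by_contra hx
    have : f.1 x = 1 := by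
      have hspec := hex.choose_spec.2
      simp only [hw, dif_pos hex] at hx
      exact hspec x hx
    simp [this] at hfx
end

section
/- If X is Menger, then C_p(X) satisfies S_fin(𝒜_𝟎, 𝒜_𝟎): for every sequence (Bₙ) of subsets of C_p(X), each 1-dense at the zero function 𝟎, there are finite sets Cₙ ⊆ Bₙ such that ⋃ₙ Cₙ is 1-dense at 𝟎. -/
open Set Filter Topology

variable {X : Type*} [TopologicalSpace X]

lemma menger_helper {X : Type*} [TopologicalSpace X] (hM : Menger X)
    (B : ℕ → Set (Cp X)) (hB : ∀ n, OneDenseAt (zeroF X) (B n))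
    (δ : ℝ) (hδ : 0 < δ) :
    ∃ C : ℕ → Set (Cp X), (∀ n, C n ⊆ B n ∧ (C n).Finite) ∧
      ∀ x : X, ∃ n, ∃ h ∈ C n, |h.1 x| < δ := by
  set 𝒰 : ℕ → Set (Set X) := fun n => {U | ∃ h ∈ B n, U = {x | |h.1 x| < δ}} with h𝒰
  have hcov : ∀ n, IsOpenCover (𝒰 n) := by
    intro n
    constructor
    · rintro U ⟨h, hh, rfl⟩
      exact isOpen_lt h.2.abs continuous_const
    · ext x
      simp only [mem_sUnion, mem_univ, iff_true]
      obtain ⟨h, hh, hx⟩ := hB n x δ hδ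
      refine ⟨{y | |h.1 y| < δ}, ⟨h, hh, rfl⟩, ?_⟩
      simpa [zeroF] using hx
  obtain ⟨𝒱, h𝒱, hcover⟩ := hM 𝒰 hcov
  have key : ∀ n, ∀ V ∈ 𝒱 n, ∃ h ∈ B n, V = {x | |h.1 x| < δ} :=
    fun n V hV => (h𝒱 n).1 hV
  have : Nonempty (Cp X) := ⟨zeroF X⟩
  choose! φ hφ hφ2 using key
  refine ⟨fun n => φ n '' 𝒱 n, fun n => ⟨?_, (h𝒱 n).2.image _⟩, ?_⟩
  · rintro h ⟨V, hV, rfl⟩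
    exact hφ n V hV
  · intro x
    have hx : x ∈ ⋃₀ ⋃ n, 𝒱 n := hcover ▸ mem_univ x
    obtain ⟨V, hV, hxV⟩ := hx
    obtain ⟨n, hVn⟩ := mem_iUnion.mp hV
    refine ⟨n, φ n V, ⟨V, hVn, rfl⟩, ?_⟩
    have := hφ2 n V hVn
    rw [this] at hxV
    exact hxV

/-- If `X` is Menger then `C_p(X)` satisfies `S_fin(𝒜_𝟎, 𝒜_𝟎)`. -/
theorem stmt18 (X : Type*) [TopologicalSpace X] [T35Space X] (hM : Menger X) :
    ∀ B : ℕ → Set (Cp X), (∀ n, OneDenseAt (zeroF X) (B n)) →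
      ∃ C : ℕ → Set (Cp X), (∀ n, C n ⊆ B n ∧ (C n).Finite) ∧
        OneDenseAt (zeroF X) (⋃ n, C n) := by
  intro B hB
  have H : ∀ j : ℕ, ∃ C : ℕ → Set (Cp X),
      (∀ k, C k ⊆ B (Nat.pair j k) ∧ (C k).Finite) ∧
      ∀ x : X, ∃ k, ∃ h ∈ C k, |h.1 x| < 1 / ((j : ℝ) + 1) := by
    intro j
    exact menger_helper hM (fun k => B (Nat.pair j k)) (fun k => hB _) _ (by positivity)
  choose D hD1 hD2 using H
  refine ⟨fun n => D n.unpair.1 n.unpair.2, fun n => ?_, ?_⟩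
  · have := hD1 n.unpair.1 n.unpair.2
    rwa [Nat.pair_unpair] at this
  · intro x ε hε
    obtain ⟨j, hj⟩ := exists_nat_one_div_lt hε
    obtain ⟨k, h, hh, hlt⟩ := hD2 j x
    refine ⟨h, mem_iUnion.mpr ⟨Nat.pair j k, ?_⟩, ?_⟩
    · simpa [Nat.unpair_pair] using hh
    · simp only [zeroF, sub_zero]
      exact hlt.trans hj
end
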